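/- arXiv:2204.11525 — 6 statements merged into one kernel-verified Lean document; each statement's English description precedes it below -/
import Mathlib

section
/- Let (x_s, y_s), w, z be mixed strategies of an n×n bimatrix game (R,C), let δ ≥ 0 and P ∈ [0,1], and suppose the stationarity inequality (H) holds: for all mixed strategies x', y', g(x_s,y_s) ≤ P·(R(w,y') − R(x',y_s) − R(x_s,y') + R(x_s,y_s)) + (1−P)·(C(x',z) − C(x',y_s) − C(x_s,y') + C(x_s,y_s)) + δ. Define λ = R(w,z) − R(x_s,z) and μ = C(w,z) − C(w,y_s). Then g(x_s,y_s) ≤ min{P·λ, (1−P)·μ} + δ. -/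
noncomputable def pay {n : ℕ} (M : Matrix (Fin n) (Fin n) ℝ) (x y : Fin n → ℝ) : ℝ :=
  ∑ i, ∑ j, x i * M i j * y j

noncomputable def bestRowPay {n : ℕ} [NeZero n] (R : Matrix (Fin n) (Fin n) ℝ) (y : Fin n → ℝ) : ℝ :=
  Finset.univ.sup' Finset.univ_nonempty (fun i => ∑ j, R i j * y j)

noncomputable def bestColPay {n : ℕ} [NeZero n] (C : Matrix (Fin n) (Fin n) ℝ) (x : Fin n → ℝ) : ℝ :=
  Finset.univ.sup' Finset.univ_nonempty (fun j => ∑ i, x i * C i j)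

noncomputable def regR {n : ℕ} [NeZero n] (R : Matrix (Fin n) (Fin n) ℝ) (x y : Fin n → ℝ) : ℝ :=
  bestRowPay R y - pay R x y

noncomputable def regC {n : ℕ} [NeZero n] (C : Matrix (Fin n) (Fin n) ℝ) (x y : Fin n → ℝ) : ℝ :=
  bestColPay C x - pay C x y

noncomputable def gFun {n : ℕ} [NeZero n] (R C : Matrix (Fin n) (Fin n) ℝ) (x y : Fin n → ℝ) : ℝ :=
  max (regR R x y) (regC C x y)

theorem stationary_lambda_mu_bound {n : ℕ} [NeZero n]
    (R C : Matrix (Fin n) (Fin n) ℝ)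
    (hR : ∀ i j, R i j ∈ Set.Icc (0 : ℝ) 1) (hC : ∀ i j, C i j ∈ Set.Icc (0 : ℝ) 1)
    (xs ys w z : Fin n → ℝ)
    (hxs : xs ∈ stdSimplex ℝ (Fin n)) (hys : ys ∈ stdSimplex ℝ (Fin n))
    (hw : w ∈ stdSimplex ℝ (Fin n)) (hz : z ∈ stdSimplex ℝ (Fin n))
    (δ P : ℝ) (hδ : 0 ≤ δ) (hP0 : 0 ≤ P) (hP1 : P ≤ 1)
    (H : ∀ x' y' : Fin n → ℝ, x' ∈ stdSimplex ℝ (Fin n) → y' ∈ stdSimplex ℝ (Fin n) →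
      gFun R C xs ys ≤
        P * (pay R w y' - pay R x' ys - pay R xs y' + pay R xs ys) +
        (1 - P) * (pay C x' z - pay C x' ys - pay C xs y' + pay C xs ys) + δ) :
    gFun R C xs ys ≤
      min (P * (pay R w z - pay R xs z)) ((1 - P) * (pay C w z - pay C w ys)) + δ := by
  rw [← min_add_add_right]
  refine le_min ?_ ?_
  · have h := H xs z hxs hz
    nlinarith [h]
  · have h := H w ys hw hys
    nlinarith [h]
end

section
/- Let w, ŵ, z be mixed strategies of an n×n bimatrix game (R,C) and let λ, μ, v_r, t_r, μ̂ be real numbers with λ < μ, v_r + t_r ≥ (μ−λ)/2, R(w,z) ≥ λ, R(ŵ,z) ≥ λ + v_r + t_r, C(w,z) ≥ μ, C(ŵ,z) ≥ μ̂, and μ̂ ≥ μ − v_r − t_r. Set p = (2·(v_r+t_r) − (μ−λ))/(2·(v_r+t_r)). Then p ∈ [0,1], and at the strategy profile (p·w + (1−p)·ŵ, z) the payoff of the row player and the payoff of the column player are both at least (λ+μ)/2. -/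
lemma pay_lin {n : ℕ} (M : Matrix (Fin n) (Fin n) ℝ) (a b : ℝ) (x y z : Fin n → ℝ) :
    pay M (fun i => a * x i + b * y i) z = a * pay M x z + b * pay M y z := by
  simp only [pay, Finset.mul_sum, ← Finset.sum_add_distrib]
  apply Finset.sum_congr rfl; intro i _
  apply Finset.sum_congr rfl; intro j _
  ring

theorem case41_payoffs {n : ℕ} [NeZero n]
    (R C : Matrix (Fin n) (Fin n) ℝ)
    (w what z : Fin n → ℝ)
    (hw : w ∈ stdSimplex ℝ (Fin n)) (hwhat : what ∈ stdSimplex ℝ (Fin n))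
    (hz : z ∈ stdSimplex ℝ (Fin n))
    (lam mu vr tr muhat : ℝ)
    (hlm : lam < mu)
    (hvt : vr + tr ≥ (mu - lam) / 2)
    (hRwz : pay R w z ≥ lam)
    (hRwhatz : pay R what z ≥ lam + vr + tr)
    (hCwz : pay C w z ≥ mu)
    (hCwhatz : pay C what z ≥ muhat)
    (hmuhat : muhat ≥ mu - vr - tr)
    (p : ℝ) (hp : p = (2 * (vr + tr) - (mu - lam)) / (2 * (vr + tr))) :
    0 ≤ p ∧ p ≤ 1 ∧
    pay R (fun i => p * w i + (1 - p) * what i) z ≥ (lam + mu) / 2 ∧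
    pay C (fun i => p * w i + (1 - p) * what i) z ≥ (lam + mu) / 2 := by
  have hs : vr + tr > 0 := by linarith
  have hp0 : 0 ≤ p := by
    rw [hp]; apply div_nonneg; linarith; linarith
  have hp1 : p ≤ 1 := by
    rw [hp]; rw [div_le_one (by linarith)]; linarith
  have hq : (1 - p) * (vr + tr) = (mu - lam) / 2 := by
    rw [hp]; field_simp; ring
  refine ⟨hp0, hp1, ?_, ?_⟩
  · rw [pay_lin]
    nlinarith [mul_le_mul_of_nonneg_left hRwz hp0, mul_le_mul_of_nonneg_left hRwhatz (by linarith : (0:ℝ) ≤ 1 - p)]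
  · rw [pay_lin]
    nlinarith [mul_le_mul_of_nonneg_left hCwz hp0, mul_le_mul_of_nonneg_left hCwhatz (by linarith : (0:ℝ) ≤ 1 - p), mul_le_mul_of_nonneg_left hmuhat (by linarith : (0:ℝ) ≤ 1 - p)]
end

section
/- Let (x_s,y_s) and (x̃,z) be mixed strategy profiles of an n×n bimatrix game (R,C) with all entries of R and C in [0,1], let δ ≥ 0, and let λ, μ be real numbers. Suppose g(x_s,y_s) ≤ (λ+μ)/4 + δ, R(x̃,z) ≥ (λ+μ)/2, and C(x̃,z) ≥ (λ+μ)/2. Then either g(x_s,y_s) ≤ 1/3 + δ, i.e. (x_s,y_s) is a (1/3+δ)-Nash equilibrium, or g(x̃,z) ≤ 1/3, i.e. (x̃,z) is a 1/3-Nash equilibrium. -/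
theorem case41_dichotomy {n : ℕ} [NeZero n]
    (R C : Matrix (Fin n) (Fin n) ℝ)
    (hR : ∀ i j, R i j ∈ Set.Icc (0 : ℝ) 1) (hC : ∀ i j, C i j ∈ Set.Icc (0 : ℝ) 1)
    (xs ys xt z : Fin n → ℝ)
    (hxs : xs ∈ stdSimplex ℝ (Fin n)) (hys : ys ∈ stdSimplex ℝ (Fin n))
    (hxt : xt ∈ stdSimplex ℝ (Fin n)) (hz : z ∈ stdSimplex ℝ (Fin n))
    (δ lam mu : ℝ) (hδ : 0 ≤ δ)
    (hg : gFun R C xs ys ≤ (lam + mu) / 4 + δ)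
    (hRpay : pay R xt z ≥ (lam + mu) / 2)
    (hCpay : pay C xt z ≥ (lam + mu) / 2) :
    gFun R C xs ys ≤ 1 / 3 + δ ∨ gFun R C xt z ≤ 1 / 3 := by
  by_cases hcase : (lam + mu) / 4 ≤ 1 / 3
  · left; linarith
  · right
    push_neg at hcase
    have hbr : bestRowPay R z ≤ 1 := by
      apply Finset.sup'_le
      intro i _
      calc ∑ j, R i j * z j ≤ ∑ j, z j := by
            apply Finset.sum_le_sum
            intro j _
            have := (hR i j).2
            have := hz.1 j
            nlinarith
        _ = 1 := hz.2
    have hbc : bestColPay C xt ≤ 1 := by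
      apply Finset.sup'_le
      intro j _
      calc ∑ i, xt i * C i j ≤ ∑ i, xt i := by
            apply Finset.sum_le_sum
            intro i _
            have := (hC i j).2
            have := hxt.1 i
            nlinarith
        _ = 1 := hxt.2
    have h1 : regR R xt z ≤ 1 / 3 := by
      unfold regR; linarith
    have h2 : regC C xt z ≤ 1 / 3 := by
      unfold regC; linarith
    exact max_le h1 h2
end

section
/- Let w, ŷ, z be mixed strategies of an n×n bimatrix game (R,C), and let λ, μ, t_r be real numbers with 1/2 < λ < μ ≤ 1 and 0 ≤ t_r ≤ 1/2, such that reg_r(w,ŷ) ≤ t_r, reg_r(w,z) ≤ 1−λ, reg_c(w,ŷ) ≤ 1−μ/2, and reg_c(w,z) ≤ 1−μ. Set q = (1 − μ/2 − t_r)/(1 + μ/2 − λ − t_r). Then q ∈ [0,1], and at the strategy profile (w, (1−q)·ŷ + q·z) the regret of each player is at most q·(1−λ) + (1−q)·t_r = (1 − μ/2 − t_r − λ + μλ/2 + μ·t_r)/(1 + μ/2 − λ − t_r). -/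
lemma pay_comb {n : ℕ} (M : Matrix (Fin n) (Fin n) ℝ) (x y z : Fin n → ℝ) (a b : ℝ) :
    pay M x (fun j => a * y j + b * z j) = a * pay M x y + b * pay M x z := by
  unfold pay
  rw [Finset.mul_sum, Finset.mul_sum, ← Finset.sum_add_distrib]
  refine Finset.sum_congr rfl fun i _ => ?_
  rw [Finset.mul_sum, Finset.mul_sum, ← Finset.sum_add_distrib]
  exact Finset.sum_congr rfl fun j _ => by ring

lemma bestRowPay_comb {n : ℕ} [NeZero n] (R : Matrix (Fin n) (Fin n) ℝ)
    (y z : Fin n → ℝ) (a b : ℝ) (ha : 0 ≤ a) (hb : 0 ≤ b) :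
    bestRowPay R (fun j => a * y j + b * z j) ≤ a * bestRowPay R y + b * bestRowPay R z := by
  apply Finset.sup'_le
  intro i _
  have h1 : ∑ j, R i j * y j ≤ bestRowPay R y :=
    Finset.le_sup' (fun i => ∑ j, R i j * y j) (Finset.mem_univ i)
  have h2 : ∑ j, R i j * z j ≤ bestRowPay R z :=
    Finset.le_sup' (fun i => ∑ j, R i j * z j) (Finset.mem_univ i)
  have : (∑ j, R i j * (a * y j + b * z j)) = a * ∑ j, R i j * y j + b * ∑ j, R i j * z j := by
    rw [Finset.mul_sum, Finset.mul_sum, ← Finset.sum_add_distrib]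
    exact Finset.sum_congr rfl fun j _ => by ring
  rw [this]
  exact add_le_add (mul_le_mul_of_nonneg_left h1 ha) (mul_le_mul_of_nonneg_left h2 hb)

theorem case42_profile_regret_bound {n : ℕ} [NeZero n]
    (R C : Matrix (Fin n) (Fin n) ℝ)
    (w yhat z : Fin n → ℝ)
    (hw : w ∈ stdSimplex ℝ (Fin n)) (hyhat : yhat ∈ stdSimplex ℝ (Fin n))
    (hz : z ∈ stdSimplex ℝ (Fin n))
    (lam mu tr : ℝ)
    (hlam : 1 / 2 < lam) (hlm : lam < mu) (hmu1 : mu ≤ 1)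
    (htr0 : 0 ≤ tr) (htr1 : tr ≤ 1 / 2)
    (hregr1 : regR R w yhat ≤ tr) (hregr2 : regR R w z ≤ 1 - lam)
    (hregc1 : regC C w yhat ≤ 1 - mu / 2) (hregc2 : regC C w z ≤ 1 - mu)
    (q : ℝ) (hq : q = (1 - mu / 2 - tr) / (1 + mu / 2 - lam - tr)) :
    0 ≤ q ∧ q ≤ 1 ∧
    regR R w (fun j => (1 - q) * yhat j + q * z j) ≤ q * (1 - lam) + (1 - q) * tr ∧
    regC C w (fun j => (1 - q) * yhat j + q * z j) ≤ q * (1 - lam) + (1 - q) * tr ∧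
    q * (1 - lam) + (1 - q) * tr =
      (1 - mu / 2 - tr - lam + mu * lam / 2 + mu * tr) / (1 + mu / 2 - lam - tr) := by
  have hA : (0:ℝ) ≤ 1 - mu / 2 - tr := by linarith
  have hD : (0:ℝ) < 1 + mu / 2 - lam - tr := by linarith
  have hq0 : 0 ≤ q := hq ▸ div_nonneg hA hD.le
  have hq1 : q ≤ 1 := by
    rw [hq, div_le_one hD]; linarith
  have hqc : q * (1 + mu / 2 - lam - tr) = 1 - mu / 2 - tr := by
    rw [hq, div_mul_cancel₀ _ hD.ne']
  have h1q : (0:ℝ) ≤ 1 - q := by linarith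
  refine ⟨hq0, hq1, ?_, ?_, ?_⟩
  · have hb := bestRowPay_comb R yhat z (1-q) q h1q hq0
    have hp := pay_comb R w yhat z (1-q) q
    simp only [regR] at *
    nlinarith [hb, hp, hregr1, hregr2]
  · have hp := pay_comb C w yhat z (1-q) q
    simp only [regC] at *
    nlinarith [hp, hregc1, hregc2]
  · rw [eq_div_iff hD.ne']
    linear_combination (1 - lam - tr) * hqc
end

section
/- Let λ, μ, t_r be real numbers with 1/2 < λ ≤ 2/3, 2/3 < μ ≤ 1, 0 ≤ t_r < (μ−λ)/2, and λ > μ/(3μ−1). Then λμ/2 − 2μ/3 − 2λ/3 + (μ − 2/3)·t_r + 2/3 ≤ 0. (Subcase 4.2(i): this shows that the stationary-point regret bound λμ/(λ+μ) + δ and the mixed-profile regret bound of Case 4.2 cannot both exceed 1/3 + δ and 1/3 respectively when v_r + t_r < (μ−λ)/2.) -/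
theorem subcase_421 (lam mu tr : ℝ)
    (hlam0 : 1 / 2 < lam) (hlam1 : lam ≤ 2 / 3)
    (hmu0 : 2 / 3 < mu) (hmu1 : mu ≤ 1)
    (htr0 : 0 ≤ tr) (htr1 : tr < (mu - lam) / 2)
    (hlm : lam > mu / (3 * mu - 1)) :
    lam * mu / 2 - 2 * mu / 3 - 2 * lam / 3 + (mu - 2 / 3) * tr + 2 / 3 ≤ 0 := by
  have h3 : (0:ℝ) < 3 * mu - 1 := by linarith
  have hlm' : lam * (3 * mu - 1) > mu := by
    have := (div_lt_iff₀ h3).mp hlm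
    linarith
  nlinarith [mul_nonneg (le_of_lt (sub_pos.mpr hmu0)) (sub_nonneg.mpr hlam1), sq_nonneg (mu - lam), sq_nonneg (lam + mu - 4/3), mul_nonneg htr0 (by linarith : (0:ℝ) ≤ mu - 2/3), mul_lt_mul_of_pos_left htr1 (by linarith : (0:ℝ) < mu - 2/3)]
end

section
/- Let λ, μ, t_r be real numbers with 1/2 < λ ≤ 2/3, μ ≤ 1, μ > λ/(3λ−1), 0 ≤ t_r, and t_r ≤ 3λ·(λ+μ−1) − μ − 3λ + 2. Then λμ/2 − 2μ/3 − 2λ/3 + (μ − 2/3)·t_r + 2/3 ≤ 0. (Subcase 4.2(ii): the three inequalities λμ/(λ+μ) > 1/3, λ(λ+μ−1)/(3λ+μ+t_r−2) > 1/3, and the mixed-profile regret bound exceeding 1/3 cannot simultaneously hold.) -/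
theorem subcase_422 (lam mu tr : ℝ)
    (hlam0 : 1 / 2 < lam) (hlam1 : lam ≤ 2 / 3)
    (hmu1 : mu ≤ 1) (hmu : mu > lam / (3 * lam - 1))
    (htr0 : 0 ≤ tr) (htr1 : tr ≤ 3 * lam * (lam + mu - 1) - mu - 3 * lam + 2) :
    lam * mu / 2 - 2 * mu / 3 - 2 * lam / 3 + (mu - 2 / 3) * tr + 2 / 3 ≤ 0 := by
  have h3 : (0:ℝ) < 3 * lam - 1 := by linarith
  have hmu' : mu * (3 * lam - 1) > lam := by
    rw [gt_iff_lt, div_lt_iff₀ h3] at hmu; linarith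
  have hmu23 : mu > 2/3 := by nlinarith
  have key : (mu - 2/3) * tr ≤ (mu - 2/3) * (3 * lam * (lam + mu - 1) - mu - 3 * lam + 2) := by
    apply mul_le_mul_of_nonneg_left htr1; linarith
  nlinarith [key, mul_pos h3 h3, sq_nonneg (mu - 1), sq_nonneg (3*lam-2), mul_nonneg (sub_nonneg.2 hmu1) (sub_nonneg.2 hlam1), sq_nonneg (lam*mu), mul_nonneg (mul_nonneg (sub_nonneg.2 hmu1) (by linarith : (0:ℝ) ≤ 2/3 - lam)) (by linarith : (0:ℝ) ≤ mu - 2/3)]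
end
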